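/- Let L be a real n×n matrix with ⟨Lx, x⟩ ≤ 0 for all x, let η > 0, β ∈ ℝ, and γ* = η + β²/η. Then the condition number of P = [(η²+β²)I - 2ηL + L²](ηI - L)⁻¹(γ*I - L)⁻¹ satisfies κ(P) ≤ 1 + β²/(2η²). -/

import Mathlib

open Matrix

/-- The continuous linear map on Euclidean space induced by a real matrix;
`‖toE A‖` is the operator 2-norm of `A`, and `inner` gives the Euclidean
inner product. -/
noncomputable def toE {n : ℕ} (A : Matrix (Fin n) (Fin n) ℝ) :
    EuclideanSpace ℝ (Fin n) →L[ℝ] EuclideanSpace ℝ (Fin n) :=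
  Matrix.toEuclideanCLM (𝕜 := ℝ) A

lemma toE_mul {n : ℕ} (A B : Matrix (Fin n) (Fin n) ℝ) (x) :
    toE (A * B) x = toE A (toE B x) := by
  simp [toE, _root_.map_mul, ContinuousLinearMap.mul_apply]

lemma toE_one {n : ℕ} (x : EuclideanSpace ℝ (Fin n)) : toE 1 x = x := by
  simp [toE]

lemma isUnit_of_toE_inj {n : ℕ} {A : Matrix (Fin n) (Fin n) ℝ}
    (h : ∀ x, toE A x = 0 → x = 0) : IsUnit A := by
  rw [← Matrix.mulVec_injective_iff_isUnit]
  intro v w hvw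
  have h2 : toE A ((WithLp.equiv 2 _).symm v) = toE A ((WithLp.equiv 2 _).symm w) := by
    simp [toE, Matrix.toEuclideanCLM_toLp, Matrix.toLin'_apply, hvw]
  have h3 : (WithLp.equiv 2 _).symm v = (WithLp.equiv 2 ((Fin n) → ℝ)).symm w := by
    have := h (((WithLp.equiv 2 _).symm v) - ((WithLp.equiv 2 _).symm w)) (by
      rw [map_sub, h2, sub_self])
    exact sub_eq_zero.mp this
  exact (WithLp.equiv 2 _).symm.injective h3

lemma isUnit_smul_one_sub {n : ℕ} (L : Matrix (Fin n) (Fin n) ℝ)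
    (hL : ∀ x : EuclideanSpace ℝ (Fin n), inner ℝ (toE L x) x ≤ (0 : ℝ))
    {c : ℝ} (hc : 0 < c) :
    IsUnit (c • (1 : Matrix (Fin n) (Fin n) ℝ) - L) := by
  apply isUnit_of_toE_inj
  intro x hx
  have happ : toE (c • (1 : Matrix (Fin n) (Fin n) ℝ) - L) x = c • x - toE L x := by
    simp [toE, map_sub, _root_.map_smul, _root_.map_one]
  rw [happ] at hx
  have h0 : (inner ℝ (c • x - toE L x) x : ℝ) = 0 := by rw [hx]; simp
  rw [inner_sub_left, real_inner_smul_left] at h0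
  have h1 := hL x
  have h2 : (0:ℝ) ≤ inner ℝ x x := real_inner_self_nonneg
  have h3 : (inner ℝ x x : ℝ) = 0 := by nlinarith
  exact inner_self_eq_zero.mp h3

set_option maxHeartbeats 1000000 in
theorem stmt_7 {n : ℕ} (L : Matrix (Fin n) (Fin n) ℝ)
    (hL : ∀ x : EuclideanSpace ℝ (Fin n), inner ℝ (toE L x) x ≤ (0 : ℝ))
    (η β γs : ℝ) (hη : 0 < η) (hγs : γs = η + β ^ 2 / η)
    (P : Matrix (Fin n) (Fin n) ℝ)
    (hP : P = ((η ^ 2 + β ^ 2) • (1 : Matrix (Fin n) (Fin n) ℝ)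
          - (2 * η) • L + L ^ 2)
        * (η • (1 : Matrix (Fin n) (Fin n) ℝ) - L)⁻¹
        * (γs • (1 : Matrix (Fin n) (Fin n) ℝ) - L)⁻¹) :
    ‖toE P‖ * ‖toE P⁻¹‖ ≤ 1 + β ^ 2 / (2 * η ^ 2) := by
  have hη' : η ≠ 0 := hη.ne'
  set T := toE L with hT
  set Mm : Matrix (Fin n) (Fin n) ℝ :=
    (η ^ 2 + β ^ 2) • 1 - (2 * η) • L + L ^ 2 with hMm
  set Am : Matrix (Fin n) (Fin n) ℝ := η • 1 - L with hAm
  set Bm : Matrix (Fin n) (Fin n) ℝ := γs • 1 - L with hBm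
  set Nm : Matrix (Fin n) (Fin n) ℝ := Mm - (β ^ 2 / η) • L with hNm
  -- pointwise descriptions
  have hMapp : ∀ x, toE Mm x = (η^2+β^2) • x - (2*η) • T x + T (T x) := by
    intro x
    simp [hMm, hT, toE, map_sub, map_add, _root_.map_smul, map_pow, _root_.map_one,
      pow_two, _root_.map_mul, ContinuousLinearMap.mul_apply]
  have hNapp : ∀ x, toE Nm x = toE Mm x - (β^2/η) • T x := by
    intro x
    simp [hNm, hT, toE, map_sub, _root_.map_smul]
  -- key inner product inequality
  have hMT : ∀ x, (inner ℝ (toE Mm x) (T x) : ℝ) ≤ 0 := by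
    intro x
    rw [hMapp]
    have h2 := hL (T x)
    have h3 : (inner ℝ x (T x) : ℝ) ≤ 0 := by rw [real_inner_comm]; exact hL x
    have h4 : (0:ℝ) ≤ inner ℝ (T x) (T x) := real_inner_self_nonneg
    rw [inner_add_left, inner_sub_left, real_inner_smul_left, real_inner_smul_left]
    nlinarith [mul_nonneg (by positivity : (0:ℝ) ≤ η^2+β^2) (neg_nonneg.mpr h3),
      mul_nonneg hη.le h4]
  -- 2η‖T x‖ ≤ ‖Mm x‖
  have hnormMT : ∀ x, 2*η*‖T x‖ ≤ ‖toE Mm x‖ := by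
    intro x
    have hrw : toE Mm x = ((η^2+β^2) • x + T (T x)) - (2*η) • T x := by
      rw [hMapp]; abel
    have hiv : (inner ℝ ((η^2+β^2) • x + T (T x)) ((2*η) • T x) : ℝ) ≤ 0 := by
      rw [inner_add_left, real_inner_smul_right, real_inner_smul_right, real_inner_smul_left]
      have h3 : (inner ℝ x (T x) : ℝ) ≤ 0 := by rw [real_inner_comm]; exact hL x
      have h2 := hL (T x)
      nlinarith [mul_nonneg (by positivity : (0:ℝ) ≤ η^2+β^2) (neg_nonneg.mpr h3)]
    have hn : ‖(2*η) • T x‖ = 2*η*‖T x‖ := by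
      rw [norm_smul, Real.norm_eq_abs, abs_of_pos (by positivity)]
    have key : (2*η*‖T x‖)^2 ≤ ‖toE Mm x‖^2 := by
      rw [hrw, norm_sub_sq_real, hn]
      nlinarith [sq_nonneg ‖(η^2+β^2) • x + T (T x)‖]
    have ha : (0:ℝ) ≤ 2*η*‖T x‖ := by positivity
    nlinarith [norm_nonneg (toE Mm x)]
  -- ‖Mm x‖ ≤ ‖Nm x‖
  have hMN : ∀ x, ‖toE Mm x‖ ≤ ‖toE Nm x‖ := by
    intro x
    have key : ‖toE Mm x‖^2 ≤ ‖toE Nm x‖^2 := by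
      rw [hNapp, norm_sub_sq_real, real_inner_smul_right]
      have h1 := hMT x
      have hc : (0:ℝ) ≤ β^2/η := by positivity
      nlinarith [sq_nonneg ‖(β^2/η) • T x‖, mul_nonneg hc (neg_nonneg.mpr h1)]
    nlinarith [norm_nonneg (toE Mm x), norm_nonneg (toE Nm x)]
  -- invertibility
  have hAu : IsUnit Am := isUnit_smul_one_sub L hL hη
  have hBu : IsUnit Bm := isUnit_smul_one_sub L hL (by rw [hγs]; positivity)
  have hMu : IsUnit Mm := by
    apply isUnit_of_toE_inj
    intro x hx
    have hTx : T x = 0 := by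
      have := hnormMT x
      rw [hx, norm_zero] at this
      have : ‖T x‖ ≤ 0 := by nlinarith
      simpa [norm_le_zero_iff] using this
    have := hMapp x
    rw [hx, hTx] at this
    simp only [smul_zero, map_zero, sub_zero, add_zero] at this
    have hpos : (0:ℝ) < η^2 + β^2 := by positivity
    have := this.symm
    rcases smul_eq_zero.mp this with h | h
    · exact absurd h hpos.ne'
    · exact h
  have hNBA : Bm * Am = Nm := by
    rw [hBm, hAm, hNm, hMm]
    subst hγs
    simp only [sub_mul, mul_sub, Matrix.smul_mul, Matrix.mul_smul, smul_smul, one_mul,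
      mul_one, pow_two]
    match_scalars <;> field_simp <;> ring
  have hNu : IsUnit Nm := by rw [← hNBA]; exact hBu.mul hAu
  have hNdet : IsUnit Nm.det := (Matrix.isUnit_iff_isUnit_det Nm).mp hNu
  have hMdet : IsUnit Mm.det := (Matrix.isUnit_iff_isUnit_det Mm).mp hMu
  -- P = Mm * Nm⁻¹ and P⁻¹ = Nm * Mm⁻¹
  have hP2 : P = Mm * Nm⁻¹ := by
    rw [hP, mul_assoc, ← Matrix.mul_inv_rev, hNBA]
  have hPinv : P⁻¹ = Nm * Mm⁻¹ := by
    apply Matrix.inv_eq_right_inv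
    rw [hP2, mul_assoc, ← mul_assoc Nm⁻¹, Matrix.nonsing_inv_mul _ hNdet, one_mul,
      Matrix.mul_nonsing_inv _ hMdet]
  have hMMinv : ∀ z, toE Mm (toE Mm⁻¹ z) = z := by
    intro z; rw [← toE_mul, Matrix.mul_nonsing_inv _ hMdet, toE_one]
  have hNNinv : ∀ z, toE Nm (toE Nm⁻¹ z) = z := by
    intro z; rw [← toE_mul, Matrix.mul_nonsing_inv _ hNdet, toE_one]
  -- norm bounds
  have hPn : ‖toE P‖ ≤ 1 := by
    refine ContinuousLinearMap.opNorm_le_bound _ zero_le_one (fun z => ?_)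
    rw [hP2, toE_mul, one_mul]
    calc ‖toE Mm (toE Nm⁻¹ z)‖ ≤ ‖toE Nm (toE Nm⁻¹ z)‖ := hMN _
      _ = ‖z‖ := by rw [hNNinv]
  have hPin : ‖toE P⁻¹‖ ≤ 1 + β^2/(2*η^2) := by
    refine ContinuousLinearMap.opNorm_le_bound _ (by positivity) (fun z => ?_)
    rw [hPinv, toE_mul, hNapp]
    set x := toE Mm⁻¹ z with hx
    have h1 : toE Mm x = z := hMMinv z
    have h2 : 2*η*‖T x‖ ≤ ‖z‖ := by rw [← h1]; exact hnormMT x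
    have h3 : ‖T x‖ ≤ ‖z‖ / (2*η) := by
      rw [le_div_iff₀ (by positivity)]
      linarith [h2]
    calc ‖toE Mm x - (β^2/η) • T x‖ ≤ ‖toE Mm x‖ + ‖(β^2/η) • T x‖ := norm_sub_le _ _
      _ = ‖z‖ + (β^2/η) * ‖T x‖ := by
          rw [h1, norm_smul, Real.norm_eq_abs, abs_of_nonneg (by positivity)]
      _ ≤ ‖z‖ + (β^2/η) * (‖z‖/(2*η)) := by
          have hc : (0:ℝ) ≤ β^2/η := by positivity
          nlinarith [mul_le_mul_of_nonneg_left h3 hc]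
      _ = (1 + β^2/(2*η^2)) * ‖z‖ := by field_simp
  calc ‖toE P‖ * ‖toE P⁻¹‖ ≤ 1 * (1 + β^2/(2*η^2)) :=
        mul_le_mul hPn hPin (norm_nonneg _) zero_le_one
    _ = 1 + β ^ 2 / (2 * η ^ 2) := one_mul _
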